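/- Satisfiability reduces to model checking: a DL-PA formula φ with variables P_φ = {p₁,…,pₙ} is satisfiable if and only if every valuation V satisfies ⟨M_φ⟩φ, where M_φ is the program (+p₁ ∪ -p₁); … ; (+pₙ ∪ -pₙ). Equivalently, φ is satisfiable iff the empty valuation satisfies ⟨M_φ⟩φ. -/

import Mathlib

/-- Valuations: sets of propositional variables. -/
abbrev Val := Set ℕ

/-- Atomic assignments: non-empty finite partial functions from variables to Bool. -/
abbrev Atom := {α : Finmap (fun _ : ℕ => Bool) // α.keys.Nonempty}

/-- The assignment +p (p := ⊤). -/
def posAssign (p : ℕ) : Atom :=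
  ⟨Finmap.singleton p true, by simp⟩

/-- The assignment -p (p := ⊥). -/
def negAssign (p : ℕ) : Atom :=
  ⟨Finmap.singleton p false, by simp⟩

/-- Update of a valuation by an assignment. -/
def upd (V : Val) (α : Atom) : Val :=
  {p | match α.1.lookup p with
       | some b => b = true
       | none => p ∈ V}

/-- Successive update by a sequence (trace) of assignments. -/
def updSeq (V : Val) (σ : List Atom) : Val := σ.foldl upd V

mutual
inductive Form : Type
  | atom : ℕ → Form
  | neg : Form → Form
  | conj : Form → Form → Form
  | box : Prog → Form → Form
inductive Prog : Type
  | assign : Atom → Prog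
  | seq : Prog → Prog → Prog
  | choice : Prog → Prog → Prog
  | star : Prog → Prog
  | test : Form → Prog
end

noncomputable instance : DecidableEq Form := Classical.decEq _
noncomputable instance : DecidableEq Prog := Classical.decEq _

def comp2 (r s : Set (Val × Val)) : Set (Val × Val) :=
  {x | ∃ W, (x.1, W) ∈ r ∧ (W, x.2) ∈ s}

def iter (r : Set (Val × Val)) : ℕ → Set (Val × Val)
  | 0 => {x | x.1 = x.2}
  | n + 1 => comp2 r (iter r n)

mutual
/-- Semantics of formulas: the set of valuations satisfying the formula. -/
def sat : Form → Set Val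
  | .atom p => {V | p ∈ V}
  | .neg φ => (sat φ)ᶜ
  | .conj φ ψ => sat φ ∩ sat ψ
  | .box π φ => {V | ∀ V', (V, V') ∈ rel π → V' ∈ sat φ}
/-- Semantics of programs: a relation between valuations. -/
def rel : Prog → Set (Val × Val)
  | .assign α => {x | x.2 = upd x.1 α}
  | .seq a b => comp2 (rel a) (rel b)
  | .choice a b => rel a ∪ rel b
  | .star a => {x | ∃ n, x ∈ iter (rel a) n}
  | .test φ => {x | x.1 = x.2 ∧ x.1 ∈ sat φ}
end

/-- Validity. -/
def valid (φ : Form) : Prop := ∀ V : Val, V ∈ sat φ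

/-- Diamond. -/
def dia (π : Prog) (φ : Form) : Form := .neg (.box π (.neg φ))

/-- Implication. -/
def implF (φ ψ : Form) : Form := .neg (.conj φ (.neg ψ))

/-- A tautology ⊤. -/
def topF : Form := .neg (.conj (.atom 0) (.neg (.atom 0)))

mutual
/-- Length of formulas. -/
def lenF : Form → ℕ
  | .atom _ => 1
  | .neg φ => 1 + lenF φ
  | .conj φ ψ => 1 + lenF φ + lenF ψ
  | .box π φ => 1 + lenP π + lenF φ
/-- Length of programs. -/
def lenP : Prog → ℕ
  | .assign α => α.1.keys.card
  | .seq a b => 1 + lenP a + lenP b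
  | .choice a b => 1 + lenP a + lenP b
  | .star a => 1 + lenP a
  | .test φ => 1 + lenF φ
end

mutual
/-- Closure of a formula. -/
noncomputable def cl : Form → Finset Form
  | .atom p => {Form.atom p}
  | .neg φ => insert (Form.neg φ) (cl φ)
  | .conj φ ψ => insert (Form.conj φ ψ) (cl φ ∪ cl ψ)
  | .box π φ => clBox π φ ∪ cl φ
termination_by φ => sizeOf φ
/-- cl□([π]φ). -/
noncomputable def clBox : Prog → Form → Finset Form
  | .assign α, φ => insert (Form.box (.assign α) φ) (α.1.keys.image Form.atom)
  | .seq a b, φ => insert (Form.box (.seq a b) φ) (clBox a (Form.box b φ))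
  | .choice a b, φ => insert (Form.box (.choice a b) φ) (clBox a φ ∪ clBox b φ)
  | .star a, φ => insert (Form.box (.star a) φ) (clBox a (Form.box (.star a) φ))
  | .test ψ, φ => insert (Form.box (.test ψ) φ) (cl ψ)
termination_by π _ => sizeOf π
end

/-- Extended closure. -/
noncomputable def clPlus (φ : Form) : Finset Form :=
  cl φ ∪ (cl φ).image Form.neg

mutual
/-- Variables occurring in a formula. -/
def varsF : Form → Finset ℕ
  | .atom p => {p}
  | .neg φ => varsF φ
  | .conj φ ψ => varsF φ ∪ varsF ψ
  | .box π φ => varsP π ∪ varsF φ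
/-- Variables occurring in a program. -/
def varsP : Prog → Finset ℕ
  | .assign α => α.1.keys
  | .seq a b => varsP a ∪ varsP b
  | .choice a b => varsP a ∪ varsP b
  | .star a => varsP a
  | .test φ => varsF φ
end

mutual
/-- Execution traces of a formula. -/
def exeF : Form → Set (List Atom)
  | .atom _ => {[]}
  | .neg φ => exeF φ
  | .conj φ ψ => exeF φ ∪ exeF ψ
  | .box π φ => exeP π ∪ exeF φ
/-- Execution traces of a program. -/
def exeP : Prog → Set (List Atom)
  | .assign α => {[α]}
  | .seq a b => {σ | ∃ σ₁ ∈ exeP a, ∃ σ₂ ∈ exeP b, σ = σ₁ ++ σ₂}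
  | .choice a b => exeP a ∪ exeP b
  | .star a => {σ | ∃ l : List (List Atom), (∀ τ ∈ l, τ ∈ exeP a) ∧ σ = l.flatten}
  | .test φ => exeF φ
end

mutual
/-- Star-free formulas. -/
def starFreeF : Form → Prop
  | .atom _ => True
  | .neg φ => starFreeF φ
  | .conj φ ψ => starFreeF φ ∧ starFreeF ψ
  | .box π φ => starFreeP π ∧ starFreeF φ
/-- Star-free programs. -/
def starFreeP : Prog → Prop
  | .assign _ => True
  | .seq a b => starFreeP a ∧ starFreeP b
  | .choice a b => starFreeP a ∧ starFreeP b
  | .star _ => False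
  | .test φ => starFreeF φ
end

/-- Test-free programs (assignments, ;, ∪, *). -/
def testFree : Prog → Prop
  | .assign _ => True
  | .seq a b => testFree a ∧ testFree b
  | .choice a b => testFree a ∧ testFree b
  | .star a => testFree a
  | .test _ => False

/-- Programs built from assignments with ; and ∪ only. -/
def basicProg : Prog → Prop
  | .assign _ => True
  | .seq a b => basicProg a ∧ basicProg b
  | .choice a b => basicProg a ∧ basicProg b
  | .star _ => False
  | .test _ => False

/-- Conjunction of a list of formulas. -/
def bigConj : List Form → Form
  | [] => topF
  | φ :: l => .conj φ (bigConj l)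

/-- The program (+p₁ ∪ -p₁); … ;(+pₙ ∪ -pₙ). -/
def Mprog : List ℕ → Prog
  | [] => .test topF
  | p :: l => .seq (.choice (.assign (posAssign p)) (.assign (negAssign p))) (Mprog l)

/-! Whether `V` satisfies `φ` depends only on `V ∩ P_φ`; for programs the matching statement,
proved simultaneously, is that agreement on a superset of the program's variables is preserved
along transitions. Given a model `W` of `φ` and any valuation `V`, the program `M_φ` reaches from
`V` the valuation that agrees with `W` on `P_φ` and with `V` elsewhere, which is then a model
of `φ`. -/

def AgreeOn (X : Set ℕ) (V V' : Val) : Prop := ∀ p ∈ X, p ∈ V ↔ p ∈ V'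

theorem AgreeOn.symm {X : Set ℕ} {V V' : Val} (h : AgreeOn X V V') : AgreeOn X V' V :=
  fun p hp => (h p hp).symm

theorem AgreeOn.upd {X : Set ℕ} {V V' : Val} (h : AgreeOn X V V') (α : Atom) :
    AgreeOn X (upd V α) (upd V' α) := by
  intro p hp
  simp only [_root_.upd, Set.mem_ofPred_eq]
  cases α.1.lookup p with
  | some b => rfl
  | none => exact h p hp

def RespectsAgreeOn (X : Set ℕ) (r : Set (Val × Val)) : Prop :=
  ∀ ⦃V V' W : Val⦄, AgreeOn X V V' → (V, W) ∈ r → ∃ W', (V', W') ∈ r ∧ AgreeOn X W W'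

namespace RespectsAgreeOn

variable {X : Set ℕ} {r s : Set (Val × Val)}

theorem comp2 (hr : RespectsAgreeOn X r) (hs : RespectsAgreeOn X s) :
    RespectsAgreeOn X (comp2 r s) := by
  rintro V V' W h ⟨U, hVU, hUW⟩
  obtain ⟨U', hV'U', hU⟩ := hr h hVU
  obtain ⟨W', hU'W', hW⟩ := hs hU hUW
  exact ⟨W', ⟨U', hV'U', hU'W'⟩, hW⟩

theorem union (hr : RespectsAgreeOn X r) (hs : RespectsAgreeOn X s) :
    RespectsAgreeOn X (r ∪ s) := by
  rintro V V' W h (hVW | hVW)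
  · obtain ⟨W', hV'W', hW⟩ := hr h hVW
    exact ⟨W', Or.inl hV'W', hW⟩
  · obtain ⟨W', hV'W', hW⟩ := hs h hVW
    exact ⟨W', Or.inr hV'W', hW⟩

theorem iter (hr : RespectsAgreeOn X r) : ∀ n, RespectsAgreeOn X (iter r n)
  | 0 => by
    rintro V V' W h (rfl : V = W)
    exact ⟨V', rfl, h⟩
  | n + 1 => hr.comp2 (iter hr n)

end RespectsAgreeOn

mutual

theorem sat_congr_of_agreeOn {X : Set ℕ} :
    ∀ (φ : Form), ↑(varsF φ) ⊆ X → ∀ {V V' : Val}, AgreeOn X V V' → (V ∈ sat φ ↔ V' ∈ sat φ)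
  | .atom p, hX, _, _, h => h p (hX (by simp [varsF]))
  | .neg ψ, hX, _, _, h => (sat_congr_of_agreeOn ψ hX h).not
  | .conj ψ χ, hX, _, _, h => by
    simp only [varsF, Finset.coe_union, Set.union_subset_iff] at hX
    exact and_congr (sat_congr_of_agreeOn ψ hX.1 h) (sat_congr_of_agreeOn χ hX.2 h)
  | .box π ψ, hX, _, _, h => by
    simp only [varsF, Finset.coe_union, Set.union_subset_iff] at hX
    have transfer : ∀ {V V' : Val}, AgreeOn X V V' →
        V ∈ sat (.box π ψ) → V' ∈ sat (.box π ψ) := by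
      intro V V' h hV W' hV'W'
      obtain ⟨W, hVW, hW⟩ := rel_respectsAgreeOn π hX.1 h.symm hV'W'
      exact (sat_congr_of_agreeOn ψ hX.2 hW).mpr (hV W hVW)
    exact ⟨transfer h, transfer h.symm⟩

theorem rel_respectsAgreeOn {X : Set ℕ} :
    ∀ (π : Prog), ↑(varsP π) ⊆ X → RespectsAgreeOn X (rel π)
  | .assign α, _ => by
    rintro V V' W h (rfl : W = upd V α)
    exact ⟨upd V' α, rfl, h.upd α⟩
  | .seq a b, hX => by
    simp only [varsP, Finset.coe_union, Set.union_subset_iff] at hX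
    exact (rel_respectsAgreeOn a hX.1).comp2 (rel_respectsAgreeOn b hX.2)
  | .choice a b, hX => by
    simp only [varsP, Finset.coe_union, Set.union_subset_iff] at hX
    exact (rel_respectsAgreeOn a hX.1).union (rel_respectsAgreeOn b hX.2)
  | .star a, hX => by
    rintro V V' W h ⟨n, hn⟩
    obtain ⟨W', hW', hW⟩ := (rel_respectsAgreeOn a hX).iter n h hn
    exact ⟨W', ⟨n, hW'⟩, hW⟩
  | .test ψ, hX => by
    rintro V V' W h ⟨rfl : V = W, hV⟩
    exact ⟨V', ⟨rfl, (sat_congr_of_agreeOn ψ hX h).mp hV⟩, h⟩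

end

theorem mem_sat_dia {π : Prog} {φ : Form} {V : Val} :
    V ∈ sat (dia π φ) ↔ ∃ W, (V, W) ∈ rel π ∧ W ∈ sat φ := by
  simp [dia, sat]

theorem sat_topF (V : Val) : V ∈ sat topF := by
  simp [topF, sat]

theorem Finmap.lookup_singleton_of_ne {p q : ℕ} (b : Bool) (hq : q ≠ p) :
    (Finmap.singleton p b : Finmap fun _ : ℕ => Bool).lookup q = none :=
  Finmap.lookup_eq_none.2 (by rwa [Finmap.mem_singleton])

theorem upd_posAssign (V : Val) (p : ℕ) : upd V (posAssign p) = insert p V := by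
  ext q
  by_cases hq : q = p
  · simp [upd, posAssign, hq, Finmap.lookup_singleton_eq]
  · simp [upd, posAssign, hq, Finmap.lookup_singleton_of_ne _ hq]

theorem upd_negAssign (V : Val) (p : ℕ) : upd V (negAssign p) = V \ {p} := by
  ext q
  by_cases hq : q = p
  · simp [upd, negAssign, hq, Finmap.lookup_singleton_eq]
  · simp [upd, negAssign, hq, Finmap.lookup_singleton_of_ne _ hq]

theorem mem_rel_Mprog_of_agreeOn :
    ∀ (l : List ℕ) {V W : Val}, AgreeOn {p | p ∉ l} V W → (V, W) ∈ rel (Mprog l)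
  | [], V, _, h => ⟨Set.ext fun p => h p List.not_mem_nil, sat_topF V⟩
  | p :: l, V, W, h => by
    have agree_off_l : ∀ U : Val, (p ∈ U ↔ p ∈ W) → (∀ q ≠ p, q ∈ U ↔ q ∈ V) →
        AgreeOn {q | q ∉ l} U W := by
      intro U hp hU q hq
      by_cases hqp : q = p
      · exact hqp ▸ hp
      · exact (hU q hqp).trans (h q (by simpa [hqp] using hq))
    by_cases hp : p ∈ W
    · refine ⟨insert p V, Or.inl (upd_posAssign V p).symm, mem_rel_Mprog_of_agreeOn l ?_⟩
      exact agree_off_l _ (by simp [hp]) fun q hq => by simp [hq]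
    · refine ⟨V \ {p}, Or.inr (upd_negAssign V p).symm, mem_rel_Mprog_of_agreeOn l ?_⟩
      exact agree_off_l _ (by simp [hp]) fun q hq => by simp [hq]

theorem mem_sat_dia_Mprog {φ : Form} {l : List ℕ} (hl : ↑(varsF φ) ⊆ {p | p ∈ l}) {W : Val}
    (hW : W ∈ sat φ) (V : Val) : V ∈ sat (dia (Mprog l) φ) := by
  let L : Set ℕ := {p | p ∈ l}
  refine mem_sat_dia.2 ⟨W ∩ L ∪ V \ L, mem_rel_Mprog_of_agreeOn l ?_, ?_⟩
  · intro q hq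
    simp_all [L]
  · refine (sat_congr_of_agreeOn φ hl fun q hq => ?_).mp hW
    simp_all [L]

theorem sat_iff_model_check (φ : Form) (l : List ℕ) (hl : l.toFinset = varsF φ) :
    ((∃ V : Val, V ∈ sat φ) ↔ ∀ V : Val, V ∈ sat (dia (Mprog l) φ)) ∧
    ((∃ V : Val, V ∈ sat φ) ↔ (∅ : Val) ∈ sat (dia (Mprog l) φ)) := by
  have vars_sub : ↑(varsF φ) ⊆ {p | p ∈ l} := fun p hp => by simpa [← hl] using hp
  have dia_of_model : (∃ W, W ∈ sat φ) → ∀ V, V ∈ sat (dia (Mprog l) φ) :=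
    fun ⟨_, hW⟩ => mem_sat_dia_Mprog vars_sub hW
  have model_of_dia : ∀ {V}, V ∈ sat (dia (Mprog l) φ) → ∃ W, W ∈ sat φ := fun hV =>
    let ⟨W, _, hW⟩ := mem_sat_dia.1 hV
    ⟨W, hW⟩
  exact ⟨⟨dia_of_model, fun h => model_of_dia (h ∅)⟩, ⟨fun h => dia_of_model h ∅, model_of_dia⟩⟩
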